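/- Fix real λ and real η and set v₀ = −λ² − λ − η², ε₁ = v₀/2, ε₂ = η(3v₀+1)/4, ε₃ = (22η²v₀ + 17η² − 7v₀² − 6v₀)/24. For ρ₀ > 0 define ε = ε₁/ρ₀ + ε₂/ρ₀² + ε₃/ρ₀³, δ = ε − η·ln(1 + ε/ρ₀), and ρ = ρ₀ + ε. Then sin(δ)·Σ_{k=0}^{3} p_k/(2ρ)^k + cos(δ)·Σ_{k=0}^{3} q_k/(2ρ)^k = O(ρ₀^{−4}) as ρ₀ → ∞, where (p_k), (q_k) are defined by p₀ = 1, q₀ = 0, and for k ≥ 0, (k+1)·p_{k+1} = u_k·p_k + v_k·q_k and (k+1)·q_{k+1} = −v_k·p_k + u_k·q_k with u_k = η(2k+1), v_k = k + k² − λ² − λ − η². -/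

import Mathlib

open Real Filter Asymptotics

private lemma npowO {a b : ℕ} (h : b ≤ a) :
    (fun t : ℝ => (t ^ a)⁻¹) =O[atTop] fun t : ℝ => (t ^ b)⁻¹ := by
  apply IsBigO.of_bound 1
  filter_upwards [eventually_ge_atTop (1 : ℝ)] with t ht
  have ht0 : (0:ℝ) < t := by linarith
  rw [one_mul, Real.norm_eq_abs, Real.norm_eq_abs,
    abs_of_nonneg (by positivity), abs_of_nonneg (by positivity)]
  exact inv_anti₀ (by positivity) (pow_le_pow_right₀ ht h)

private lemma monO (c : ℝ) {j b : ℕ} (h : b ≤ j) :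
    (fun t : ℝ => c / t ^ j) =O[atTop] fun t : ℝ => (t ^ b)⁻¹ := by
  apply IsBigO.of_bound |c|
  filter_upwards [eventually_ge_atTop (1 : ℝ)] with t ht
  have ht0 : (0:ℝ) < t := by linarith
  rw [Real.norm_eq_abs, Real.norm_eq_abs, abs_div,
    abs_of_nonneg (by positivity : (0:ℝ) ≤ t ^ j),
    abs_of_nonneg (by positivity : (0:ℝ) ≤ (t ^ b)⁻¹), div_eq_mul_inv]
  exact mul_le_mul_of_nonneg_left (inv_anti₀ (by positivity) (pow_le_pow_right₀ ht h)) (abs_nonneg c)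

private lemma constO (c : ℝ) :
    (fun _ : ℝ => c) =O[atTop] fun t : ℝ => (t ^ 0)⁻¹ := by
  apply IsBigO.of_bound |c|
  filter_upwards with t
  simp

private lemma mulO {f g : ℝ → ℝ} {a b c : ℕ} (h : c ≤ a + b)
    (hf : f =O[atTop] fun t : ℝ => (t ^ a)⁻¹) (hg : g =O[atTop] fun t : ℝ => (t ^ b)⁻¹) :
    (fun t => f t * g t) =O[atTop] fun t : ℝ => (t ^ c)⁻¹ := by
  have e : (fun t : ℝ => (t ^ a)⁻¹ * (t ^ b)⁻¹) = fun t : ℝ => (t ^ (a + b))⁻¹ := by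
    funext t; rw [pow_add, mul_inv]
  exact (e ▸ hf.mul hg).trans (npowO h)




private lemma logbound {u : ℝ} (h : |u| ≤ 1 / 2) : |Real.log (1 + u) - u| ≤ 2 * u ^ 2 := by
  have hx : |(-u)| < 1 := by rw [abs_neg]; linarith [abs_nonneg u]
  have hb := Real.abs_log_sub_add_sum_range_le hx 1
  rw [Finset.sum_range_one] at hb
  norm_num at hb
  rw [show Real.log (1 + u) - u = -u + Real.log (1 + u) from by ring]
  have hd : u ^ 2 / (1 - |u|) ≤ 2 * u ^ 2 := by
    rw [div_le_iff₀ (by linarith [abs_nonneg u] : (0:ℝ) < 1 - |u|)]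
    have hsq : |u| ^ 2 = u ^ 2 := sq_abs u
    nlinarith [abs_nonneg u, sq_nonneg u]
  exact hb.trans hd

private lemma normpos {t : ℝ} (h : 1 ≤ t) (j : ℕ) : ‖(t ^ j)⁻¹‖ = (t ^ j)⁻¹ := by
  have : (0:ℝ) < t := by linarith
  rw [Real.norm_eq_abs, abs_of_pos (by positivity)]

private lemma L1 {t E : ℝ} (h1 : 1 ≤ t) (h2 : |E| ≤ t / 2) :
    ‖1 / (2 * (t + E))‖ ≤ 1 * ‖(t ^ 1)⁻¹‖ := by
  have ht0 : (0:ℝ) < t := by linarith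
  have hrge : t / 2 ≤ t + E := by have := (abs_le.mp h2).1; linarith
  have hrpos : (0:ℝ) < t + E := by linarith
  rw [normpos h1, one_mul, Real.norm_eq_abs, abs_of_pos (by positivity), pow_one,
    div_le_iff₀ (by positivity)]
  rw [inv_mul_eq_div, le_div_iff₀ ht0]
  linarith

private lemma L2 {t E K : ℝ} (h1 : 1 ≤ t) (hK : 0 ≤ K) (h2 : |E| ≤ K / t) (h3 : K / t ≤ t / 2) :
    ‖1 / (2 * (t + E)) - 1 / (2 * t)‖ ≤ K * ‖(t ^ 3)⁻¹‖ := by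
  have ht0 : (0:ℝ) < t := by linarith
  have hEt : |E| ≤ t / 2 := h2.trans h3
  have hrge : t / 2 ≤ t + E := by have := (abs_le.mp hEt).1; linarith
  have hrpos : (0:ℝ) < t + E := by linarith
  have hid : 1 / (2 * (t + E)) - 1 / (2 * t) = -E / (2 * t * (t + E)) := by
    field_simp
    ring
  rw [hid, normpos h1, Real.norm_eq_abs, abs_div, abs_neg,
    abs_of_pos (by positivity : (0:ℝ) < 2 * t * (t + E)), div_le_iff₀ (by positivity)]
  have key : K / t ≤ K * (t ^ 3)⁻¹ * (2 * t * (t + E)) := by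
    have e : K * (t ^ 3)⁻¹ * (2 * t * (t + E)) = 2 * K * (t + E) / t ^ 2 := by
      field_simp
    rw [e, div_le_div_iff₀ ht0 (by positivity)]
    nlinarith [mul_nonneg (mul_nonneg hK ht0.le) (by linarith : (0:ℝ) ≤ t + E - t / 2),
      mul_nonneg hK ht0.le, sq_nonneg t]
  exact h2.trans key

private lemma L3 {t E K : ℝ} (h1 : 1 ≤ t) (hK : 0 ≤ K) (h2 : |E| ≤ K / t) (h3 : K / t ≤ t / 2) :
    ‖1 / (2 * (t + E)) - (1 / (2 * t) - E / (2 * t ^ 2))‖ ≤ K ^ 2 * ‖(t ^ 4)⁻¹‖ := by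
  have ht0 : (0:ℝ) < t := by linarith
  have hEt : |E| ≤ t / 2 := h2.trans h3
  have hrge : t / 2 ≤ t + E := by have := (abs_le.mp hEt).1; linarith
  have hrpos : (0:ℝ) < t + E := by linarith
  have hid : 1 / (2 * (t + E)) - (1 / (2 * t) - E / (2 * t ^ 2)) = E ^ 2 / (2 * t ^ 2 * (t + E)) := by
    field_simp
    ring
  rw [hid, normpos h1, Real.norm_eq_abs, abs_div,
    abs_of_pos (by positivity : (0:ℝ) < 2 * t ^ 2 * (t + E)), div_le_iff₀ (by positivity)]
  have hE2 : E ^ 2 ≤ K ^ 2 / t ^ 2 := by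
    have := pow_le_pow_left₀ (abs_nonneg E) h2 2
    rw [sq_abs] at this
    calc E ^ 2 ≤ (K / t) ^ 2 := this
      _ = K ^ 2 / t ^ 2 := by ring
  have hE2' : |E ^ 2| = E ^ 2 := abs_of_nonneg (sq_nonneg E)
  rw [hE2']
  have key : K ^ 2 / t ^ 2 ≤ K ^ 2 * (t ^ 4)⁻¹ * (2 * t ^ 2 * (t + E)) := by
    have e : K ^ 2 * (t ^ 4)⁻¹ * (2 * t ^ 2 * (t + E)) = 2 * K ^ 2 * (t + E) / t ^ 2 := by
      field_simp
    rw [e, div_le_div_iff₀ (by positivity) (by positivity)]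
    nlinarith [mul_nonneg (mul_nonneg (sq_nonneg K) (by positivity : (0:ℝ) ≤ t ^ 2))
        (by linarith : (0:ℝ) ≤ t + E - t / 2),
      mul_nonneg (sq_nonneg K) (by nlinarith : (0:ℝ) ≤ t ^ 3 - t ^ 2)]
  exact hE2.trans key

private lemma L4 {t E K : ℝ} (h1 : 1 ≤ t) (hK : 0 ≤ K) (h2 : |E| ≤ K / t) (h3 : K / t ≤ t / 2) :
    ‖Real.log (1 + E / t) - E / t‖ ≤ 2 * K ^ 2 * ‖(t ^ 4)⁻¹‖ := by
  have ht0 : (0:ℝ) < t := by linarith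
  have hu : |E / t| ≤ K / t ^ 2 := by
    rw [abs_div, abs_of_pos ht0]
    calc |E| / t ≤ (K / t) / t := by gcongr
      _ = K / t ^ 2 := by ring
  have h12 : K / t ^ 2 ≤ 1 / 2 := by
    have : (K / t) / t ≤ (t / 2) / t := by gcongr
    calc K / t ^ 2 = (K / t) / t := by ring
      _ ≤ (t / 2) / t := this
      _ = 1 / 2 := by field_simp
  have hlb := logbound (hu.trans h12)
  have hu2 : (E / t) ^ 2 ≤ K ^ 2 / t ^ 4 := by
    have := pow_le_pow_left₀ (abs_nonneg (E / t)) hu 2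
    rw [sq_abs] at this
    calc (E / t) ^ 2 ≤ (K / t ^ 2) ^ 2 := this
      _ = K ^ 2 / t ^ 4 := by ring
  rw [normpos h1, Real.norm_eq_abs]
  calc |Real.log (1 + E / t) - E / t| ≤ 2 * (E / t) ^ 2 := hlb
    _ ≤ 2 * (K ^ 2 / t ^ 4) := by linarith
    _ = 2 * K ^ 2 * (t ^ 4)⁻¹ := by ring

private lemma L5 {x C t : ℝ} (h1 : 1 ≤ t) (hC : |x| ≤ C / t) (hx1 : |x| ≤ 1) :
    ‖Real.sin x - (x - x ^ 3 / 6)‖ ≤ 5 / 96 * C ^ 4 * ‖(t ^ 4)⁻¹‖ := by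
  have ht0 : (0:ℝ) < t := by linarith
  have h4 : |x| ^ 4 ≤ C ^ 4 / t ^ 4 := by
    have := pow_le_pow_left₀ (abs_nonneg x) hC 4
    calc |x| ^ 4 ≤ (C / t) ^ 4 := this
      _ = C ^ 4 / t ^ 4 := by ring
  rw [normpos h1, Real.norm_eq_abs]
  calc |Real.sin x - (x - x ^ 3 / 6)| ≤ |x| ^ 4 * (5 / 96) := (Real.sin_bound hx1).trans (by
        have h5 : |x| ^ 5 = |x| ^ 4 * |x| := pow_succ _ _
        have h4n : 0 ≤ |x| ^ 4 := by positivity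
        nlinarith [mul_nonneg h4n (sub_nonneg.mpr hx1)])
    _ ≤ (C ^ 4 / t ^ 4) * (5 / 96) := by
        apply mul_le_mul_of_nonneg_right h4 (by norm_num)
    _ = 5 / 96 * C ^ 4 * (t ^ 4)⁻¹ := by ring

private lemma L6 {x C t : ℝ} (h1 : 1 ≤ t) (hC : |x| ≤ C / t) (hx1 : |x| ≤ 1) :
    ‖Real.cos x - (1 - x ^ 2 / 2)‖ ≤ 5 / 96 * C ^ 4 * ‖(t ^ 4)⁻¹‖ := by
  have ht0 : (0:ℝ) < t := by linarith
  have h4 : |x| ^ 4 ≤ C ^ 4 / t ^ 4 := by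
    have := pow_le_pow_left₀ (abs_nonneg x) hC 4
    calc |x| ^ 4 ≤ (C / t) ^ 4 := this
      _ = C ^ 4 / t ^ 4 := by ring
  rw [normpos h1, Real.norm_eq_abs]
  calc |Real.cos x - (1 - x ^ 2 / 2)| ≤ |x| ^ 4 * (5 / 96) := Real.cos_bound hx1
    _ ≤ (C ^ 4 / t ^ 4) * (5 / 96) := by
        apply mul_le_mul_of_nonneg_right h4 (by norm_num)
    _ = 5 / 96 * C ^ 4 * (t ^ 4)⁻¹ := by ring

private lemma pw1 (a x : ℝ) : a / x = a * (1 / x) := by rw [mul_one_div]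

private lemma pw2 (a x : ℝ) : a / x ^ 2 = a * (1 / x * (1 / x)) := by
  rw [div_mul_div_comm, one_mul, ← sq, mul_one_div]

private lemma pw3 (a x : ℝ) : a / x ^ 3 = a * (1 / x * (1 / x * (1 / x))) := by
  rw [div_mul_div_comm, div_mul_div_comm, one_mul, one_mul,
    show x * (x * x) = x ^ 3 by ring, mul_one_div]

set_option maxHeartbeats 1600000 in
private lemma master (η v0 c1 c2 c3 P1 P2 P3 Q1 Q2 Q3 : ℝ)
    (hc1 : c1 = v0 / 2) (hc2 : c2 = η * (3 * v0 + 1) / 4)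
    (hc3 : c3 = (22 * η ^ 2 * v0 + 17 * η ^ 2 - 7 * v0 ^ 2 - 6 * v0) / 24)
    (hP1 : P1 = η) (hP2 : P2 = 3 / 2 * η ^ 2 - v0 - v0 ^ 2 / 2)
    (hP3 : P3 = 5 / 2 * η ^ 3 - 6 * η * v0 - 3 / 2 * η * v0 ^ 2 - 2 * η)
    (hQ1 : Q1 = -v0) (hQ2 : Q2 = -η - 2 * η * v0)
    (hQ3 : Q3 = -14 / 3 * η ^ 2 + 2 * v0 + 4 / 3 * v0 ^ 2 - 23 / 6 * η ^ 2 * v0 + 1 / 6 * v0 ^ 3) :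
    (fun t : ℝ => Real.sin (c1 / t + c2 / t ^ 2 + c3 / t ^ 3 - η * Real.log (1 + (c1 / t + c2 / t ^ 2 + c3 / t ^ 3) / t)) * (1 + P1 / (2 * (t + (c1 / t + c2 / t ^ 2 + c3 / t ^ 3))) + P2 / (2 * (t + (c1 / t + c2 / t ^ 2 + c3 / t ^ 3))) ^ 2 + P3 / (2 * (t + (c1 / t + c2 / t ^ 2 + c3 / t ^ 3))) ^ 3) + Real.cos (c1 / t + c2 / t ^ 2 + c3 / t ^ 3 - η * Real.log (1 + (c1 / t + c2 / t ^ 2 + c3 / t ^ 3) / t)) * (Q1 / (2 * (t + (c1 / t + c2 / t ^ 2 + c3 / t ^ 3))) + Q2 / (2 * (t + (c1 / t + c2 / t ^ 2 + c3 / t ^ 3))) ^ 2 + Q3 / (2 * (t + (c1 / t + c2 / t ^ 2 + c3 / t ^ 3))) ^ 3))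
      =O[atTop] fun t : ℝ => (t ^ 4)⁻¹ := by
  have egoal : (fun t : ℝ => Real.sin (c1 / t + c2 / t ^ 2 + c3 / t ^ 3 - η * Real.log (1 + (c1 / t + c2 / t ^ 2 + c3 / t ^ 3) / t)) * (1 + P1 / (2 * (t + (c1 / t + c2 / t ^ 2 + c3 / t ^ 3))) + P2 / (2 * (t + (c1 / t + c2 / t ^ 2 + c3 / t ^ 3))) ^ 2 + P3 / (2 * (t + (c1 / t + c2 / t ^ 2 + c3 / t ^ 3))) ^ 3) + Real.cos (c1 / t + c2 / t ^ 2 + c3 / t ^ 3 - η * Real.log (1 + (c1 / t + c2 / t ^ 2 + c3 / t ^ 3) / t)) * (Q1 / (2 * (t + (c1 / t + c2 / t ^ 2 + c3 / t ^ 3))) + Q2 / (2 * (t + (c1 / t + c2 / t ^ 2 + c3 / t ^ 3))) ^ 2 + Q3 / (2 * (t + (c1 / t + c2 / t ^ 2 + c3 / t ^ 3))) ^ 3))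
      = fun t : ℝ => Real.sin (c1 / t + c2 / t ^ 2 + c3 / t ^ 3 - η * Real.log (1 + (c1 / t + c2 / t ^ 2 + c3 / t ^ 3) / t)) * (1 + P1 * (1 / (2 * (t + (c1 / t + c2 / t ^ 2 + c3 / t ^ 3)))) + P2 * ((1 / (2 * (t + (c1 / t + c2 / t ^ 2 + c3 / t ^ 3)))) * (1 / (2 * (t + (c1 / t + c2 / t ^ 2 + c3 / t ^ 3))))) + P3 * ((1 / (2 * (t + (c1 / t + c2 / t ^ 2 + c3 / t ^ 3)))) * ((1 / (2 * (t + (c1 / t + c2 / t ^ 2 + c3 / t ^ 3)))) * (1 / (2 * (t + (c1 / t + c2 / t ^ 2 + c3 / t ^ 3))))))) + Real.cos (c1 / t + c2 / t ^ 2 + c3 / t ^ 3 - η * Real.log (1 + (c1 / t + c2 / t ^ 2 + c3 / t ^ 3) / t)) * (Q1 * (1 / (2 * (t + (c1 / t + c2 / t ^ 2 + c3 / t ^ 3)))) + Q2 * ((1 / (2 * (t + (c1 / t + c2 / t ^ 2 + c3 / t ^ 3)))) * (1 / (2 * (t + (c1 / t + c2 / t ^ 2 + c3 / t ^ 3)))))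 + Q3 * ((1 / (2 * (t + (c1 / t + c2 / t ^ 2 + c3 / t ^ 3)))) * ((1 / (2 * (t + (c1 / t + c2 / t ^ 2 + c3 / t ^ 3)))) * (1 / (2 * (t + (c1 / t + c2 / t ^ 2 + c3 / t ^ 3))))))) := by
    funext t
    rw [pw1 P1 (2 * (t + (c1 / t + c2 / t ^ 2 + c3 / t ^ 3))), pw2 P2 (2 * (t + (c1 / t + c2 / t ^ 2 + c3 / t ^ 3))), pw3 P3 (2 * (t + (c1 / t + c2 / t ^ 2 + c3 / t ^ 3))), pw1 Q1 (2 * (t + (c1 / t + c2 / t ^ 2 + c3 / t ^ 3))), pw2 Q2 (2 * (t + (c1 / t + c2 / t ^ 2 + c3 / t ^ 3))), pw3 Q3 (2 * (t + (c1 / t + c2 / t ^ 2 + c3 / t ^ 3)))]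
  rw [egoal]
  set K := |c1| + |c2| + |c3| with hKdef
  have hK : 0 ≤ K := by positivity
  have hr : ∀ᶠ t in atTop, 1 ≤ t ∧ |c1 / t + c2 / t ^ 2 + c3 / t ^ 3| ≤ K / t ∧ K / t ≤ t / 2 := by
    filter_upwards [eventually_ge_atTop (1 : ℝ), eventually_ge_atTop (2 * K + 1)] with t h1 h2
    have ht0 : (0:ℝ) < t := by linarith
    refine ⟨h1, ?_, ?_⟩
    · have e1 : |c1 / t| ≤ |c1| / t := by rw [abs_div, abs_of_pos ht0]
      have e2 : |c2 / t ^ 2| ≤ |c2| / t := by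
        rw [abs_div, abs_of_pos (by positivity : (0:ℝ) < t ^ 2)]
        gcongr
        nlinarith
      have e3 : |c3 / t ^ 3| ≤ |c3| / t := by
        rw [abs_div, abs_of_pos (by positivity : (0:ℝ) < t ^ 3)]
        gcongr
        nlinarith
      calc |c1 / t + c2 / t ^ 2 + c3 / t ^ 3| ≤ |c1 / t + c2 / t ^ 2| + |c3 / t ^ 3| := abs_add_le _ _
        _ ≤ |c1 / t| + |c2 / t ^ 2| + |c3 / t ^ 3| := by linarith [abs_add_le (c1 / t) (c2 / t ^ 2)]
        _ ≤ |c1| / t + |c2| / t + |c3| / t := by linarith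
        _ = K / t := by rw [hKdef]; ring
    · rw [div_le_div_iff₀ ht0 (by norm_num : (0:ℝ) < 2)]
      nlinarith
  have hhalf : (fun t : ℝ => (1 / (2 * t))) =O[atTop] (fun t : ℝ => (t ^ 1)⁻¹) := by
    have e : (fun t : ℝ => (1 / (2 * t))) = fun t : ℝ => (1 : ℝ) / 2 / t ^ 1 := by funext t; ring
    rw [e]; exact monO (1 / 2) le_rfl
  have hlog : (fun t : ℝ => Real.log (1 + (c1 / t + c2 / t ^ 2 + c3 / t ^ 3) / t) - (c1 / t + c2 / t ^ 2 + c3 / t ^ 3) / t) =O[atTop] (fun t : ℝ => (t ^ 4)⁻¹) := by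
    apply IsBigO.of_bound (2 * K ^ 2)
    filter_upwards [hr] with t ht
    exact L4 ht.1 hK ht.2.1 ht.2.2
  have hDdiff : (fun t : ℝ => (c1 / t + c2 / t ^ 2 + c3 / t ^ 3 - η * Real.log (1 + (c1 / t + c2 / t ^ 2 + c3 / t ^ 3) / t)) - (c1 / t + (c2 - η * c1) / t ^ 2 + (c3 - η * c2) / t ^ 3)) =O[atTop] (fun t : ℝ => (t ^ 4)⁻¹) := by
    have e : (fun t : ℝ => (c1 / t + c2 / t ^ 2 + c3 / t ^ 3 - η * Real.log (1 + (c1 / t + c2 / t ^ 2 + c3 / t ^ 3) / t)) - (c1 / t + (c2 - η * c1) / t ^ 2 + (c3 - η * c2) / t ^ 3))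
        = fun t : ℝ => -η * (Real.log (1 + (c1 / t + c2 / t ^ 2 + c3 / t ^ 3) / t) - (c1 / t + c2 / t ^ 2 + c3 / t ^ 3) / t) + (-(η * c3)) / t ^ 4 := by
      funext t; ring
    rw [e]
    exact ((hlog.const_mul_left (-η)).add (monO (-(η * c3)) le_rfl))
  have hDH1 : (fun t : ℝ => (c1 / t + (c2 - η * c1) / t ^ 2 + (c3 - η * c2) / t ^ 3)) =O[atTop] (fun t : ℝ => (t ^ 1)⁻¹) := by
    have e : (fun t : ℝ => (c1 / t + (c2 - η * c1) / t ^ 2 + (c3 - η * c2) / t ^ 3)) = fun t : ℝ =>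
        c1 / t ^ 1 + (c2 - η * c1) / t ^ 2 + (c3 - η * c2) / t ^ 3 := by
      funext t; rw [pow_one]
    rw [e]
    exact ((monO c1 le_rfl).add (monO _ (by norm_num))).add (monO _ (by norm_num))
  have hDL1 : (fun t : ℝ => (c1 / t + c2 / t ^ 2 + c3 / t ^ 3 - η * Real.log (1 + (c1 / t + c2 / t ^ 2 + c3 / t ^ 3) / t))) =O[atTop] (fun t : ℝ => (t ^ 1)⁻¹) := by
    have e : (fun t : ℝ => (c1 / t + c2 / t ^ 2 + c3 / t ^ 3 - η * Real.log (1 + (c1 / t + c2 / t ^ 2 + c3 / t ^ 3) / t))) = fun t : ℝ => ((c1 / t + c2 / t ^ 2 + c3 / t ^ 3 - η * Real.log (1 + (c1 / t + c2 / t ^ 2 + c3 / t ^ 3) / t)) - (c1 / t + (c2 - η * c1) / t ^ 2 + (c3 - η * c2) / t ^ 3)) + (c1 / t + (c2 - η * c1) / t ^ 2 + (c3 - η * c2) / t ^ 3) := by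
      funext t; ring
    rw [e]
    exact (hDdiff.trans (npowO (by norm_num))).add hDH1
  obtain ⟨Cd, hCd⟩ := isBigO_iff.mp hDL1
  have hdlsmall : ∀ᶠ t in atTop, 1 ≤ t ∧ |(c1 / t + c2 / t ^ 2 + c3 / t ^ 3 - η * Real.log (1 + (c1 / t + c2 / t ^ 2 + c3 / t ^ 3) / t))| ≤ (max Cd 1) / t ∧ |(c1 / t + c2 / t ^ 2 + c3 / t ^ 3 - η * Real.log (1 + (c1 / t + c2 / t ^ 2 + c3 / t ^ 3) / t))| ≤ 1 := by
    filter_upwards [hCd, eventually_ge_atTop (1 : ℝ), eventually_ge_atTop (max Cd 1)]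
      with t hb h1 h2
    have ht0 : (0:ℝ) < t := by linarith
    have hn : ‖(t ^ 1)⁻¹‖ = 1 / t := by
      rw [Real.norm_eq_abs, abs_of_pos (by positivity), pow_one, one_div]
    rw [Real.norm_eq_abs, hn] at hb
    have hb2 : |(c1 / t + c2 / t ^ 2 + c3 / t ^ 3 - η * Real.log (1 + (c1 / t + c2 / t ^ 2 + c3 / t ^ 3) / t))| ≤ (max Cd 1) / t := by
      calc |(c1 / t + c2 / t ^ 2 + c3 / t ^ 3 - η * Real.log (1 + (c1 / t + c2 / t ^ 2 + c3 / t ^ 3) / t))| ≤ Cd * (1 / t) := hb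
        _ ≤ (max Cd 1) * (1 / t) := by
            apply mul_le_mul_of_nonneg_right (le_max_left _ _) (by positivity)
        _ = (max Cd 1) / t := by ring
    refine ⟨h1, hb2, hb2.trans ?_⟩
    rw [div_le_one ht0]; exact h2
  have hsin : (fun t : ℝ => Real.sin (c1 / t + c2 / t ^ 2 + c3 / t ^ 3 - η * Real.log (1 + (c1 / t + c2 / t ^ 2 + c3 / t ^ 3) / t)) - ((c1 / t + c2 / t ^ 2 + c3 / t ^ 3 - η * Real.log (1 + (c1 / t + c2 / t ^ 2 + c3 / t ^ 3) / t)) - (c1 / t + c2 / t ^ 2 + c3 / t ^ 3 - η * Real.log (1 + (c1 / t + c2 / t ^ 2 + c3 / t ^ 3) / t)) ^ 3 / 6)) =O[atTop] (fun t : ℝ => (t ^ 4)⁻¹) := by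
    apply IsBigO.of_bound (5 / 96 * (max Cd 1) ^ 4)
    filter_upwards [hdlsmall] with t ht
    exact L5 ht.1 ht.2.1 ht.2.2
  have hcos : (fun t : ℝ => Real.cos (c1 / t + c2 / t ^ 2 + c3 / t ^ 3 - η * Real.log (1 + (c1 / t + c2 / t ^ 2 + c3 / t ^ 3) / t)) - (1 - (c1 / t + c2 / t ^ 2 + c3 / t ^ 3 - η * Real.log (1 + (c1 / t + c2 / t ^ 2 + c3 / t ^ 3) / t)) ^ 2 / 2)) =O[atTop] (fun t : ℝ => (t ^ 4)⁻¹) := by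
    apply IsBigO.of_bound (5 / 96 * (max Cd 1) ^ 4)
    filter_upwards [hdlsmall] with t ht
    exact L6 ht.1 ht.2.1 ht.2.2
  have hDL0 : (fun t : ℝ => (c1 / t + c2 / t ^ 2 + c3 / t ^ 3 - η * Real.log (1 + (c1 / t + c2 / t ^ 2 + c3 / t ^ 3) / t))) =O[atTop] (fun t : ℝ => (t ^ 0)⁻¹) := hDL1.trans (npowO (by norm_num))
  have hDH0 : (fun t : ℝ => (c1 / t + (c2 - η * c1) / t ^ 2 + (c3 - η * c2) / t ^ 3)) =O[atTop] (fun t : ℝ => (t ^ 0)⁻¹) := hDH1.trans (npowO (by norm_num))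
  have hDHc : (fun t : ℝ => (c1 / t + (c2 - η * c1) / t ^ 2 + (c3 - η * c2) / t ^ 3) - c1 / t) =O[atTop] (fun t : ℝ => (t ^ 2)⁻¹) := by
    have e : (fun t : ℝ => (c1 / t + (c2 - η * c1) / t ^ 2 + (c3 - η * c2) / t ^ 3) - c1 / t) = fun t : ℝ =>
        (c2 - η * c1) / t ^ 2 + (c3 - η * c2) / t ^ 3 := by
      funext t; ring
    rw [e]
    exact (monO _ le_rfl).add (monO _ (by norm_num))
  have hc1t : (fun t : ℝ => c1 / t) =O[atTop] (fun t : ℝ => (t ^ 1)⁻¹) := by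
    have e : (fun t : ℝ => c1 / t) = fun t : ℝ => c1 / t ^ 1 := by funext t; rw [pow_one]
    rw [e]; exact monO c1 le_rfl
  have hbr1 : (fun t : ℝ => 1 - ((c1 / t + c2 / t ^ 2 + c3 / t ^ 3 - η * Real.log (1 + (c1 / t + c2 / t ^ 2 + c3 / t ^ 3) / t)) * (c1 / t + c2 / t ^ 2 + c3 / t ^ 3 - η * Real.log (1 + (c1 / t + c2 / t ^ 2 + c3 / t ^ 3) / t)) + (c1 / t + c2 / t ^ 2 + c3 / t ^ 3 - η * Real.log (1 + (c1 / t + c2 / t ^ 2 + c3 / t ^ 3) / t)) * (c1 / t + (c2 - η * c1) / t ^ 2 + (c3 - η * c2) / t ^ 3) + (c1 / t + (c2 - η * c1) / t ^ 2 + (c3 - η * c2) / t ^ 3) * (c1 / t + (c2 - η * c1) / t ^ 2 + (c3 - η * c2) / t ^ 3)) / 6)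
      =O[atTop] (fun t : ℝ => (t ^ 0)⁻¹) := by
    have e : (fun t : ℝ => 1 - ((c1 / t + c2 / t ^ 2 + c3 / t ^ 3 - η * Real.log (1 + (c1 / t + c2 / t ^ 2 + c3 / t ^ 3) / t)) * (c1 / t + c2 / t ^ 2 + c3 / t ^ 3 - η * Real.log (1 + (c1 / t + c2 / t ^ 2 + c3 / t ^ 3) / t)) + (c1 / t + c2 / t ^ 2 + c3 / t ^ 3 - η * Real.log (1 + (c1 / t + c2 / t ^ 2 + c3 / t ^ 3) / t)) * (c1 / t + (c2 - η * c1) / t ^ 2 + (c3 - η * c2) / t ^ 3) + (c1 / t + (c2 - η * c1) / t ^ 2 + (c3 - η * c2) / t ^ 3) * (c1 / t + (c2 - η * c1) / t ^ 2 + (c3 - η * c2) / t ^ 3)) / 6)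
        = fun t : ℝ => 1 + (-(1:ℝ)/6) * (((c1 / t + c2 / t ^ 2 + c3 / t ^ 3 - η * Real.log (1 + (c1 / t + c2 / t ^ 2 + c3 / t ^ 3) / t)) * (c1 / t + c2 / t ^ 2 + c3 / t ^ 3 - η * Real.log (1 + (c1 / t + c2 / t ^ 2 + c3 / t ^ 3) / t)) + (c1 / t + c2 / t ^ 2 + c3 / t ^ 3 - η * Real.log (1 + (c1 / t + c2 / t ^ 2 + c3 / t ^ 3) / t)) * (c1 / t + (c2 - η * c1) / t ^ 2 + (c3 - η * c2) / t ^ 3)) + (c1 / t + (c2 - η * c1) / t ^ 2 + (c3 - η * c2) / t ^ 3) * (c1 / t + (c2 - η * c1) / t ^ 2 + (c3 - η * c2) / t ^ 3)) := by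
      funext t; ring
    rw [e]
    exact (constO 1).add ((((mulO (by norm_num) hDL0 hDL0).add (mulO (by norm_num) hDL0 hDH0)).add
      (mulO (by norm_num) hDH0 hDH0)).const_mul_left _)
  have hbr3 : (fun t : ℝ => ((c1 / t + (c2 - η * c1) / t ^ 2 + (c3 - η * c2) / t ^ 3) * (c1 / t + (c2 - η * c1) / t ^ 2 + (c3 - η * c2) / t ^ 3) + (c1 / t + (c2 - η * c1) / t ^ 2 + (c3 - η * c2) / t ^ 3) * (c1 / t)) + (c1 / t) * (c1 / t))
      =O[atTop] (fun t : ℝ => (t ^ 2)⁻¹) :=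
    ((mulO (by norm_num) hDH1 hDH1).add (mulO (by norm_num) hDH1 hc1t)).add
      (mulO (by norm_num) hc1t hc1t)
  have hsinS : (fun t : ℝ => Real.sin (c1 / t + c2 / t ^ 2 + c3 / t ^ 3 - η * Real.log (1 + (c1 / t + c2 / t ^ 2 + c3 / t ^ 3) / t)) - (c1 / t + (c2 - η * c1) / t ^ 2 + (c3 - η * c2 - c1 ^ 3 / 6) / t ^ 3)) =O[atTop] (fun t : ℝ => (t ^ 4)⁻¹) := by
    have e : (fun t : ℝ => Real.sin (c1 / t + c2 / t ^ 2 + c3 / t ^ 3 - η * Real.log (1 + (c1 / t + c2 / t ^ 2 + c3 / t ^ 3) / t)) - (c1 / t + (c2 - η * c1) / t ^ 2 + (c3 - η * c2 - c1 ^ 3 / 6) / t ^ 3))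
        = fun t : ℝ => ((Real.sin (c1 / t + c2 / t ^ 2 + c3 / t ^ 3 - η * Real.log (1 + (c1 / t + c2 / t ^ 2 + c3 / t ^ 3) / t)) - ((c1 / t + c2 / t ^ 2 + c3 / t ^ 3 - η * Real.log (1 + (c1 / t + c2 / t ^ 2 + c3 / t ^ 3) / t)) - (c1 / t + c2 / t ^ 2 + c3 / t ^ 3 - η * Real.log (1 + (c1 / t + c2 / t ^ 2 + c3 / t ^ 3) / t)) ^ 3 / 6))
            + ((c1 / t + c2 / t ^ 2 + c3 / t ^ 3 - η * Real.log (1 + (c1 / t + c2 / t ^ 2 + c3 / t ^ 3) / t)) - (c1 / t + (c2 - η * c1) / t ^ 2 + (c3 - η * c2) / t ^ 3)) * (1 - ((c1 / t + c2 / t ^ 2 + c3 / t ^ 3 - η * Real.log (1 + (c1 / t + c2 / t ^ 2 + c3 / t ^ 3) / t)) * (c1 / t + c2 / t ^ 2 + c3 / t ^ 3 - η * Real.log (1 + (c1 / t + c2 / t ^ 2 + c3 / t ^ 3) / t)) + (c1 / t + c2 / t ^ 2 + c3 / t ^ 3 - η * Real.log (1 + (c1 / t + c2 / t ^ 2 +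 c3 / t ^ 3) / t)) * (c1 / t + (c2 - η * c1) / t ^ 2 + (c3 - η * c2) / t ^ 3) + (c1 / t + (c2 - η * c1) / t ^ 2 + (c3 - η * c2) / t ^ 3) * (c1 / t + (c2 - η * c1) / t ^ 2 + (c3 - η * c2) / t ^ 3)) / 6))
            + (-(1:ℝ)/6) * (((c1 / t + (c2 - η * c1) / t ^ 2 + (c3 - η * c2) / t ^ 3) - c1 / t) * (((c1 / t + (c2 - η * c1) / t ^ 2 + (c3 - η * c2) / t ^ 3) * (c1 / t + (c2 - η * c1) / t ^ 2 + (c3 - η * c2) / t ^ 3) + (c1 / t + (c2 - η * c1) / t ^ 2 + (c3 - η * c2) / t ^ 3) * (c1 / t)) + (c1 / t) * (c1 / t))) := by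
      funext t; ring
    rw [e]
    exact (hsin.add (mulO (by norm_num) hDdiff hbr1)).add
      ((mulO (by norm_num) hDHc hbr3).const_mul_left _)
  have hcosC : (fun t : ℝ => Real.cos (c1 / t + c2 / t ^ 2 + c3 / t ^ 3 - η * Real.log (1 + (c1 / t + c2 / t ^ 2 + c3 / t ^ 3) / t)) - (1 - c1 ^ 2 / (2 * t ^ 2) - c1 * (c2 - η * c1) / t ^ 3)) =O[atTop] (fun t : ℝ => (t ^ 4)⁻¹) := by
    have e : (fun t : ℝ => Real.cos (c1 / t + c2 / t ^ 2 + c3 / t ^ 3 - η * Real.log (1 + (c1 / t + c2 / t ^ 2 + c3 / t ^ 3) / t)) - (1 - c1 ^ 2 / (2 * t ^ 2) - c1 * (c2 - η * c1) / t ^ 3))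
        = fun t : ℝ => ((Real.cos (c1 / t + c2 / t ^ 2 + c3 / t ^ 3 - η * Real.log (1 + (c1 / t + c2 / t ^ 2 + c3 / t ^ 3) / t)) - (1 - (c1 / t + c2 / t ^ 2 + c3 / t ^ 3 - η * Real.log (1 + (c1 / t + c2 / t ^ 2 + c3 / t ^ 3) / t)) ^ 2 / 2))
            + (-(1:ℝ)/2) * (((c1 / t + c2 / t ^ 2 + c3 / t ^ 3 - η * Real.log (1 + (c1 / t + c2 / t ^ 2 + c3 / t ^ 3) / t)) - (c1 / t + (c2 - η * c1) / t ^ 2 + (c3 - η * c2) / t ^ 3)) * ((c1 / t + c2 / t ^ 2 + c3 / t ^ 3 - η * Real.log (1 + (c1 / t + c2 / t ^ 2 + c3 / t ^ 3) / t)) + (c1 / t + (c2 - η * c1) / t ^ 2 + (c3 - η * c2) / t ^ 3))))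
            + (-(1:ℝ)/2) * ((((c2 - η * c1) ^ 2 + 2 * c1 * (c3 - η * c2)) / t ^ 4
                + (2 * (c2 - η * c1) * (c3 - η * c2)) / t ^ 5) + (c3 - η * c2) ^ 2 / t ^ 6) := by
      funext t; ring
    rw [e]
    exact (hcos.add ((mulO (by norm_num) hDdiff (hDL0.add hDH0)).const_mul_left _)).add
      ((((monO _ le_rfl).add (monO _ (by norm_num))).add (monO _ (by norm_num))).const_mul_left _)
  have hs0 : (fun t : ℝ => (1 / (2 * (t + (c1 / t + c2 / t ^ 2 + c3 / t ^ 3))))) =O[atTop] (fun t : ℝ => (t ^ 1)⁻¹) := by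
    apply IsBigO.of_bound 1
    filter_upwards [hr] with t ht
    exact L1 ht.1 (ht.2.1.trans ht.2.2)
  have hs1 : (fun t : ℝ => (1 / (2 * (t + (c1 / t + c2 / t ^ 2 + c3 / t ^ 3)))) - (1 / (2 * t))) =O[atTop] (fun t : ℝ => (t ^ 3)⁻¹) := by
    apply IsBigO.of_bound K
    filter_upwards [hr] with t ht
    exact L2 ht.1 hK ht.2.1 ht.2.2
  have hs2 : (fun t : ℝ => (1 / (2 * (t + (c1 / t + c2 / t ^ 2 + c3 / t ^ 3)))) - (1 / (2 * t) - c1 / (2 * t ^ 3))) =O[atTop] (fun t : ℝ => (t ^ 4)⁻¹) := by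
    have e : (fun t : ℝ => (1 / (2 * (t + (c1 / t + c2 / t ^ 2 + c3 / t ^ 3)))) - (1 / (2 * t) - c1 / (2 * t ^ 3)))
        = fun t : ℝ => ((1 / (2 * (t + (c1 / t + c2 / t ^ 2 + c3 / t ^ 3)))) - (1 / (2 * t) - (c1 / t + c2 / t ^ 2 + c3 / t ^ 3) / (2 * t ^ 2)))
            + ((-(c2 / 2)) / t ^ 4 + (-(c3 / 2)) / t ^ 5) := by
      funext t; ring
    rw [e]
    refine IsBigO.add ?_ ((monO _ le_rfl).add (monO _ (by norm_num)))
    apply IsBigO.of_bound (K ^ 2)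
    filter_upwards [hr] with t ht
    exact L3 ht.1 hK ht.2.1 ht.2.2
  have hsum1 : (fun t : ℝ => (1 / (2 * (t + (c1 / t + c2 / t ^ 2 + c3 / t ^ 3)))) + (1 / (2 * t))) =O[atTop] (fun t : ℝ => (t ^ 1)⁻¹) := hs0.add hhalf
  have hbrc : (fun t : ℝ => ((1 / (2 * (t + (c1 / t + c2 / t ^ 2 + c3 / t ^ 3)))) * (1 / (2 * (t + (c1 / t + c2 / t ^ 2 + c3 / t ^ 3)))) + (1 / (2 * (t + (c1 / t + c2 / t ^ 2 + c3 / t ^ 3)))) * (1 / (2 * t))) + (1 / (2 * t)) * (1 / (2 * t))) =O[atTop] (fun t : ℝ => (t ^ 2)⁻¹) :=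
    ((mulO (by norm_num) hs0 hs0).add (mulO (by norm_num) hs0 hhalf)).add
      (mulO (by norm_num) hhalf hhalf)
  have hPdiff : (fun t : ℝ => (1 + P1 * (1 / (2 * (t + (c1 / t + c2 / t ^ 2 + c3 / t ^ 3)))) + P2 * ((1 / (2 * (t + (c1 / t + c2 / t ^ 2 + c3 / t ^ 3)))) * (1 / (2 * (t + (c1 / t + c2 / t ^ 2 + c3 / t ^ 3))))) + P3 * ((1 / (2 * (t + (c1 / t + c2 / t ^ 2 + c3 / t ^ 3)))) * ((1 / (2 * (t + (c1 / t + c2 / t ^ 2 + c3 / t ^ 3)))) * (1 / (2 * (t + (c1 / t + c2 / t ^ 2 + c3 / t ^ 3))))))) - (1 + P1 * (1 / (2 * t) - c1 / (2 * t ^ 3)) + P2 / (4 * t ^ 2) + P3 / (8 * t ^ 3))) =O[atTop] (fun t : ℝ => (t ^ 4)⁻¹) := by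
    have e : (fun t : ℝ => (1 + P1 * (1 / (2 * (t + (c1 / t + c2 / t ^ 2 + c3 / t ^ 3)))) + P2 * ((1 / (2 * (t + (c1 / t + c2 / t ^ 2 + c3 / t ^ 3)))) * (1 / (2 * (t + (c1 / t + c2 / t ^ 2 + c3 / t ^ 3))))) + P3 * ((1 / (2 * (t + (c1 / t + c2 / t ^ 2 + c3 / t ^ 3)))) * ((1 / (2 * (t + (c1 / t + c2 / t ^ 2 + c3 / t ^ 3)))) * (1 / (2 * (t + (c1 / t + c2 / t ^ 2 + c3 / t ^ 3))))))) - (1 + P1 * (1 / (2 * t) - c1 / (2 * t ^ 3)) + P2 / (4 * t ^ 2) + P3 / (8 * t ^ 3)))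
        = fun t : ℝ => (P1 * ((1 / (2 * (t + (c1 / t + c2 / t ^ 2 + c3 / t ^ 3)))) - (1 / (2 * t) - c1 / (2 * t ^ 3)))
            + P2 * (((1 / (2 * (t + (c1 / t + c2 / t ^ 2 + c3 / t ^ 3)))) - (1 / (2 * t))) * ((1 / (2 * (t + (c1 / t + c2 / t ^ 2 + c3 / t ^ 3)))) + (1 / (2 * t)))))
            + P3 * (((1 / (2 * (t + (c1 / t + c2 / t ^ 2 + c3 / t ^ 3)))) - (1 / (2 * t))) * (((1 / (2 * (t + (c1 / t + c2 / t ^ 2 + c3 / t ^ 3)))) * (1 / (2 * (t + (c1 / t + c2 / t ^ 2 + c3 / t ^ 3)))) + (1 / (2 * (t + (c1 / t + c2 / t ^ 2 + c3 / t ^ 3)))) * (1 / (2 * t))) + (1 / (2 * t)) * (1 / (2 * t)))) := by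
      funext t; ring
    rw [e]
    exact ((hs2.const_mul_left P1).add
        ((mulO (by norm_num) hs1 hsum1).const_mul_left P2)).add
      ((mulO (by norm_num) hs1 hbrc).const_mul_left P3)
  have hQdiff : (fun t : ℝ => (Q1 * (1 / (2 * (t + (c1 / t + c2 / t ^ 2 + c3 / t ^ 3)))) + Q2 * ((1 / (2 * (t + (c1 / t + c2 / t ^ 2 + c3 / t ^ 3)))) * (1 / (2 * (t + (c1 / t + c2 / t ^ 2 + c3 / t ^ 3))))) + Q3 * ((1 / (2 * (t + (c1 / t + c2 / t ^ 2 + c3 / t ^ 3)))) * ((1 / (2 * (t + (c1 / t + c2 / t ^ 2 + c3 / t ^ 3)))) * (1 / (2 * (t + (c1 / t + c2 / t ^ 2 + c3 / t ^ 3))))))) - (Q1 * (1 / (2 * t) - c1 / (2 * t ^ 3)) + Q2 / (4 * t ^ 2) + Q3 / (8 * t ^ 3))) =O[atTop] (fun t : ℝ => (t ^ 4)⁻¹) := by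
    have e : (fun t : ℝ => (Q1 * (1 / (2 * (t + (c1 / t + c2 / t ^ 2 + c3 / t ^ 3)))) + Q2 * ((1 / (2 * (t + (c1 / t + c2 / t ^ 2 + c3 / t ^ 3)))) * (1 / (2 * (t + (c1 / t + c2 / t ^ 2 + c3 / t ^ 3))))) + Q3 * ((1 / (2 * (t + (c1 / t + c2 / t ^ 2 + c3 / t ^ 3)))) * ((1 / (2 * (t + (c1 / t + c2 / t ^ 2 + c3 / t ^ 3)))) * (1 / (2 * (t + (c1 / t + c2 / t ^ 2 + c3 / t ^ 3))))))) - (Q1 * (1 / (2 * t) - c1 / (2 * t ^ 3)) + Q2 / (4 * t ^ 2) + Q3 / (8 * t ^ 3)))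
        = fun t : ℝ => (Q1 * ((1 / (2 * (t + (c1 / t + c2 / t ^ 2 + c3 / t ^ 3)))) - (1 / (2 * t) - c1 / (2 * t ^ 3)))
            + Q2 * (((1 / (2 * (t + (c1 / t + c2 / t ^ 2 + c3 / t ^ 3)))) - (1 / (2 * t))) * ((1 / (2 * (t + (c1 / t + c2 / t ^ 2 + c3 / t ^ 3)))) + (1 / (2 * t)))))
            + Q3 * (((1 / (2 * (t + (c1 / t + c2 / t ^ 2 + c3 / t ^ 3)))) - (1 / (2 * t))) * (((1 / (2 * (t + (c1 / t + c2 / t ^ 2 + c3 / t ^ 3)))) * (1 / (2 * (t + (c1 / t + c2 / t ^ 2 + c3 / t ^ 3)))) + (1 / (2 * (t + (c1 / t + c2 / t ^ 2 + c3 / t ^ 3)))) * (1 / (2 * t))) + (1 / (2 * t)) * (1 / (2 * t)))) := by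
      funext t; ring
    rw [e]
    exact ((hs2.const_mul_left Q1).add
        ((mulO (by norm_num) hs1 hsum1).const_mul_left Q2)).add
      ((mulO (by norm_num) hs1 hbrc).const_mul_left Q3)
  have hbP : (fun t : ℝ => (1 + P1 * (1 / (2 * (t + (c1 / t + c2 / t ^ 2 + c3 / t ^ 3)))) + P2 * ((1 / (2 * (t + (c1 / t + c2 / t ^ 2 + c3 / t ^ 3)))) * (1 / (2 * (t + (c1 / t + c2 / t ^ 2 + c3 / t ^ 3))))) + P3 * ((1 / (2 * (t + (c1 / t + c2 / t ^ 2 + c3 / t ^ 3)))) * ((1 / (2 * (t + (c1 / t + c2 / t ^ 2 + c3 / t ^ 3)))) * (1 / (2 * (t + (c1 / t + c2 / t ^ 2 + c3 / t ^ 3)))))))) =O[atTop] (fun t : ℝ => (t ^ 0)⁻¹) := by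
    have e : (fun t : ℝ => (1 + P1 * (1 / (2 * (t + (c1 / t + c2 / t ^ 2 + c3 / t ^ 3)))) + P2 * ((1 / (2 * (t + (c1 / t + c2 / t ^ 2 + c3 / t ^ 3)))) * (1 / (2 * (t + (c1 / t + c2 / t ^ 2 + c3 / t ^ 3))))) + P3 * ((1 / (2 * (t + (c1 / t + c2 / t ^ 2 + c3 / t ^ 3)))) * ((1 / (2 * (t + (c1 / t + c2 / t ^ 2 + c3 / t ^ 3)))) * (1 / (2 * (t + (c1 / t + c2 / t ^ 2 + c3 / t ^ 3))))))))
        = fun t : ℝ => ((1 + P1 * (1 / (2 * (t + (c1 / t + c2 / t ^ 2 + c3 / t ^ 3))))) + P2 * ((1 / (2 * (t + (c1 / t + c2 / t ^ 2 + c3 / t ^ 3)))) * (1 / (2 * (t + (c1 / t + c2 / t ^ 2 + c3 / t ^ 3))))))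
            + P3 * ((1 / (2 * (t + (c1 / t + c2 / t ^ 2 + c3 / t ^ 3)))) * ((1 / (2 * (t + (c1 / t + c2 / t ^ 2 + c3 / t ^ 3)))) * (1 / (2 * (t + (c1 / t + c2 / t ^ 2 + c3 / t ^ 3)))))) := by
      funext t; ring
    rw [e]
    exact (((constO 1).add ((hs0.trans (npowO (by norm_num))).const_mul_left P1)).add
        ((mulO (by norm_num) hs0 hs0).const_mul_left P2)).add
      ((mulO (by norm_num) hs0 (mulO (a:=1) (b:=1) (c:=2) (by norm_num) hs0 hs0)).const_mul_left P3)
  have hbQ : (fun t : ℝ => (Q1 * (1 / (2 * (t + (c1 / t + c2 / t ^ 2 + c3 / t ^ 3)))) + Q2 * ((1 / (2 * (t + (c1 / t + c2 / t ^ 2 + c3 / t ^ 3)))) * (1 / (2 * (t + (c1 / t + c2 / t ^ 2 + c3 / t ^ 3))))) + Q3 * ((1 / (2 * (t + (c1 / t + c2 / t ^ 2 + c3 / t ^ 3)))) * ((1 / (2 * (t + (c1 / t + c2 / t ^ 2 + c3 / t ^ 3)))) * (1 / (2 * (t + (c1 / t + c2 / t ^ 2 + c3 / t ^ 3))))))))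 =O[atTop] (fun t : ℝ => (t ^ 0)⁻¹) := by
    have e : (fun t : ℝ => (Q1 * (1 / (2 * (t + (c1 / t + c2 / t ^ 2 + c3 / t ^ 3)))) + Q2 * ((1 / (2 * (t + (c1 / t + c2 / t ^ 2 + c3 / t ^ 3)))) * (1 / (2 * (t + (c1 / t + c2 / t ^ 2 + c3 / t ^ 3))))) + Q3 * ((1 / (2 * (t + (c1 / t + c2 / t ^ 2 + c3 / t ^ 3)))) * ((1 / (2 * (t + (c1 / t + c2 / t ^ 2 + c3 / t ^ 3)))) * (1 / (2 * (t + (c1 / t + c2 / t ^ 2 + c3 / t ^ 3))))))))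
        = fun t : ℝ => ((Q1 * (1 / (2 * (t + (c1 / t + c2 / t ^ 2 + c3 / t ^ 3))))) + Q2 * ((1 / (2 * (t + (c1 / t + c2 / t ^ 2 + c3 / t ^ 3)))) * (1 / (2 * (t + (c1 / t + c2 / t ^ 2 + c3 / t ^ 3))))))
            + Q3 * ((1 / (2 * (t + (c1 / t + c2 / t ^ 2 + c3 / t ^ 3)))) * ((1 / (2 * (t + (c1 / t + c2 / t ^ 2 + c3 / t ^ 3)))) * (1 / (2 * (t + (c1 / t + c2 / t ^ 2 + c3 / t ^ 3)))))) := by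
      funext t; ring
    rw [e]
    exact ((((hs0.trans (npowO (by norm_num))).const_mul_left Q1)).add
        ((mulO (by norm_num) hs0 hs0).const_mul_left Q2)).add
      ((mulO (by norm_num) hs0 (mulO (a:=1) (b:=1) (c:=2) (by norm_num) hs0 hs0)).const_mul_left Q3)
  have hbSh : (fun t : ℝ => (c1 / t + (c2 - η * c1) / t ^ 2 + (c3 - η * c2 - c1 ^ 3 / 6) / t ^ 3)) =O[atTop] (fun t : ℝ => (t ^ 0)⁻¹) := by
    have e : (fun t : ℝ => (c1 / t + (c2 - η * c1) / t ^ 2 + (c3 - η * c2 - c1 ^ 3 / 6) / t ^ 3)) = fun t : ℝ =>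
        c1 / t ^ 1 + (c2 - η * c1) / t ^ 2 + (c3 - η * c2 - c1 ^ 3 / 6) / t ^ 3 := by
      funext t; rw [pow_one]
    rw [e]
    exact ((monO _ (by norm_num)).add (monO _ (by norm_num))).add (monO _ (by norm_num))
  have hbCh : (fun t : ℝ => (1 - c1 ^ 2 / (2 * t ^ 2) - c1 * (c2 - η * c1) / t ^ 3)) =O[atTop] (fun t : ℝ => (t ^ 0)⁻¹) := by
    have e : (fun t : ℝ => (1 - c1 ^ 2 / (2 * t ^ 2) - c1 * (c2 - η * c1) / t ^ 3)) = fun t : ℝ =>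
        1 + (-(c1 ^ 2 / 2)) / t ^ 2 + (-(c1 * (c2 - η * c1))) / t ^ 3 := by
      funext t; ring
    rw [e]
    exact ((constO 1).add (monO _ (by norm_num))).add (monO _ (by norm_num))
  have hFG : (fun t : ℝ => (Real.sin (c1 / t + c2 / t ^ 2 + c3 / t ^ 3 - η * Real.log (1 + (c1 / t + c2 / t ^ 2 + c3 / t ^ 3) / t)) * (1 + P1 * (1 / (2 * (t + (c1 / t + c2 / t ^ 2 + c3 / t ^ 3)))) + P2 * ((1 / (2 * (t + (c1 / t + c2 / t ^ 2 + c3 / t ^ 3)))) * (1 / (2 * (t + (c1 / t + c2 / t ^ 2 + c3 / t ^ 3))))) + P3 * ((1 / (2 * (t + (c1 / t + c2 / t ^ 2 + c3 / t ^ 3)))) * ((1 / (2 * (t + (c1 / t + c2 / t ^ 2 + c3 / t ^ 3)))) * (1 / (2 * (t + (c1 / t + c2 / t ^ 2 + c3 / t ^ 3))))))) + Real.cos (c1 / t + c2 / t ^ 2 + c3 / t ^ 3 - η * Real.log (1 + (c1 / t + c2 / t ^ 2 + c3 / t ^ 3) / t)) * (Q1 * (1 / (2 * (t + (c1 / t +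 c2 / t ^ 2 + c3 / t ^ 3)))) + Q2 * ((1 / (2 * (t + (c1 / t + c2 / t ^ 2 + c3 / t ^ 3)))) * (1 / (2 * (t + (c1 / t + c2 / t ^ 2 + c3 / t ^ 3))))) + Q3 * ((1 / (2 * (t + (c1 / t + c2 / t ^ 2 + c3 / t ^ 3)))) * ((1 / (2 * (t + (c1 / t + c2 / t ^ 2 + c3 / t ^ 3)))) * (1 / (2 * (t + (c1 / t + c2 / t ^ 2 + c3 / t ^ 3))))))))
      - ((c1 / t + (c2 - η * c1) / t ^ 2 + (c3 - η * c2 - c1 ^ 3 / 6) / t ^ 3) * (1 + P1 * (1 / (2 * t) - c1 / (2 * t ^ 3)) + P2 / (4 * t ^ 2) + P3 / (8 * t ^ 3)) + (1 - c1 ^ 2 / (2 * t ^ 2) - c1 * (c2 - η * c1) / t ^ 3) * (Q1 * (1 / (2 * t) - c1 / (2 * t ^ 3)) + Q2 / (4 * t ^ 2) + Q3 / (8 * t ^ 3)))) =O[atTop] (fun t : ℝ => (t ^ 4)⁻¹) := by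
    have e : (fun t : ℝ => (Real.sin (c1 / t + c2 / t ^ 2 + c3 / t ^ 3 - η * Real.log (1 + (c1 / t + c2 / t ^ 2 + c3 / t ^ 3) / t)) * (1 + P1 * (1 / (2 * (t + (c1 / t + c2 / t ^ 2 + c3 / t ^ 3)))) + P2 * ((1 / (2 * (t + (c1 / t + c2 / t ^ 2 + c3 / t ^ 3)))) * (1 / (2 * (t + (c1 / t + c2 / t ^ 2 + c3 / t ^ 3))))) + P3 * ((1 / (2 * (t + (c1 / t + c2 / t ^ 2 + c3 / t ^ 3)))) * ((1 / (2 * (t + (c1 / t + c2 / t ^ 2 + c3 / t ^ 3)))) * (1 / (2 * (t + (c1 / t + c2 / t ^ 2 + c3 / t ^ 3))))))) + Real.cos (c1 / t + c2 / t ^ 2 + c3 / t ^ 3 - η * Real.log (1 + (c1 / t + c2 / t ^ 2 + c3 / t ^ 3) / t)) * (Q1 * (1 / (2 * (t + (c1 / t + c2 / t ^ 2 + c3 / t ^ 3)))) + Q2 * ((1 / (2 * (t + (c1 / t + c2 / t ^ 2 + c3 / t ^ 3)))) * (1 / (2 * (t + (c1 / t + c2 / t ^ 2 + c3 / t ^ 3)))))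 + Q3 * ((1 / (2 * (t + (c1 / t + c2 / t ^ 2 + c3 / t ^ 3)))) * ((1 / (2 * (t + (c1 / t + c2 / t ^ 2 + c3 / t ^ 3)))) * (1 / (2 * (t + (c1 / t + c2 / t ^ 2 + c3 / t ^ 3))))))))
          - ((c1 / t + (c2 - η * c1) / t ^ 2 + (c3 - η * c2 - c1 ^ 3 / 6) / t ^ 3) * (1 + P1 * (1 / (2 * t) - c1 / (2 * t ^ 3)) + P2 / (4 * t ^ 2) + P3 / (8 * t ^ 3)) + (1 - c1 ^ 2 / (2 * t ^ 2) - c1 * (c2 - η * c1) / t ^ 3) * (Q1 * (1 / (2 * t) - c1 / (2 * t ^ 3)) + Q2 / (4 * t ^ 2) + Q3 / (8 * t ^ 3))))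
        = fun t : ℝ => (((Real.sin (c1 / t + c2 / t ^ 2 + c3 / t ^ 3 - η * Real.log (1 + (c1 / t + c2 / t ^ 2 + c3 / t ^ 3) / t)) - (c1 / t + (c2 - η * c1) / t ^ 2 + (c3 - η * c2 - c1 ^ 3 / 6) / t ^ 3)) * (1 + P1 * (1 / (2 * (t + (c1 / t + c2 / t ^ 2 + c3 / t ^ 3)))) + P2 * ((1 / (2 * (t + (c1 / t + c2 / t ^ 2 + c3 / t ^ 3)))) * (1 / (2 * (t + (c1 / t + c2 / t ^ 2 + c3 / t ^ 3))))) + P3 * ((1 / (2 * (t + (c1 / t + c2 / t ^ 2 + c3 / t ^ 3)))) * ((1 / (2 * (t + (c1 / t + c2 / t ^ 2 + c3 / t ^ 3)))) * (1 / (2 * (t + (c1 / t + c2 / t ^ 2 + c3 / t ^ 3)))))))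
            + (c1 / t + (c2 - η * c1) / t ^ 2 + (c3 - η * c2 - c1 ^ 3 / 6) / t ^ 3) * ((1 + P1 * (1 / (2 * (t + (c1 / t + c2 / t ^ 2 + c3 / t ^ 3)))) + P2 * ((1 / (2 * (t + (c1 / t + c2 / t ^ 2 + c3 / t ^ 3)))) * (1 / (2 * (t + (c1 / t + c2 / t ^ 2 + c3 / t ^ 3))))) + P3 * ((1 / (2 * (t + (c1 / t + c2 / t ^ 2 + c3 / t ^ 3)))) * ((1 / (2 * (t + (c1 / t + c2 / t ^ 2 + c3 / t ^ 3)))) * (1 / (2 * (t + (c1 / t + c2 / t ^ 2 + c3 / t ^ 3))))))) - (1 + P1 * (1 / (2 * t) - c1 / (2 * t ^ 3)) + P2 / (4 * t ^ 2) + P3 / (8 * t ^ 3))))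
            + (Real.cos (c1 / t + c2 / t ^ 2 + c3 / t ^ 3 - η * Real.log (1 + (c1 / t + c2 / t ^ 2 + c3 / t ^ 3) / t)) - (1 - c1 ^ 2 / (2 * t ^ 2) - c1 * (c2 - η * c1) / t ^ 3)) * (Q1 * (1 / (2 * (t + (c1 / t + c2 / t ^ 2 + c3 / t ^ 3)))) + Q2 * ((1 / (2 * (t + (c1 / t + c2 / t ^ 2 + c3 / t ^ 3)))) * (1 / (2 * (t + (c1 / t + c2 / t ^ 2 + c3 / t ^ 3))))) + Q3 * ((1 / (2 * (t + (c1 / t + c2 / t ^ 2 + c3 / t ^ 3)))) * ((1 / (2 * (t + (c1 / t + c2 / t ^ 2 + c3 / t ^ 3)))) * (1 / (2 * (t + (c1 / t + c2 / t ^ 2 + c3 / t ^ 3))))))))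
            + (1 - c1 ^ 2 / (2 * t ^ 2) - c1 * (c2 - η * c1) / t ^ 3) * ((Q1 * (1 / (2 * (t + (c1 / t + c2 / t ^ 2 + c3 / t ^ 3)))) + Q2 * ((1 / (2 * (t + (c1 / t + c2 / t ^ 2 + c3 / t ^ 3)))) * (1 / (2 * (t + (c1 / t + c2 / t ^ 2 + c3 / t ^ 3))))) + Q3 * ((1 / (2 * (t + (c1 / t + c2 / t ^ 2 + c3 / t ^ 3)))) * ((1 / (2 * (t + (c1 / t + c2 / t ^ 2 + c3 / t ^ 3)))) * (1 / (2 * (t + (c1 / t + c2 / t ^ 2 + c3 / t ^ 3))))))) - (Q1 * (1 / (2 * t) - c1 / (2 * t ^ 3)) + Q2 / (4 * t ^ 2) + Q3 / (8 * t ^ 3))) := by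
      funext t; ring
    rw [e]
    exact (((mulO (by norm_num) hsinS hbP).add (mulO (by norm_num) hbSh hPdiff)).add
      (mulO (by norm_num) hcosC hbQ)).add (mulO (by norm_num) hbCh hQdiff)
  have hG : (fun t : ℝ => (c1 / t + (c2 - η * c1) / t ^ 2 + (c3 - η * c2 - c1 ^ 3 / 6) / t ^ 3) * (1 + P1 * (1 / (2 * t) - c1 / (2 * t ^ 3)) + P2 / (4 * t ^ 2) + P3 / (8 * t ^ 3)) + (1 - c1 ^ 2 / (2 * t ^ 2) - c1 * (c2 - η * c1) / t ^ 3) * (Q1 * (1 / (2 * t) - c1 / (2 * t ^ 3)) + Q2 / (4 * t ^ 2) + Q3 / (8 * t ^ 3))) =O[atTop] (fun t : ℝ => (t ^ 4)⁻¹) := by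
    have e : (fun t : ℝ => (c1 / t + (c2 - η * c1) / t ^ 2 + (c3 - η * c2 - c1 ^ 3 / 6) / t ^ 3) * (1 + P1 * (1 / (2 * t) - c1 / (2 * t ^ 3)) + P2 / (4 * t ^ 2) + P3 / (8 * t ^ 3)) + (1 - c1 ^ 2 / (2 * t ^ 2) - c1 * (c2 - η * c1) / t ^ 3) * (Q1 * (1 / (2 * t) - c1 / (2 * t ^ 3)) + Q2 / (4 * t ^ 2) + Q3 / (8 * t ^ 3)))
        = fun t : ℝ => ((η * (-5/16 * v0 - 31/48 * v0 ^ 2 - 1/96 * v0 ^ 3) + η ^ 3 * (31/96 + 1/3 * v0)) / t ^ 4 + (v0 ^ 2 / 16 + 7 * v0 ^ 3 / 96 - v0 ^ 4 / 96 + η ^ 2 * (-1/16 - 47/96 * v0 - 65/192 * v0 ^ 2 + 3/64 * v0 ^ 3) + η ^ 4 * (1/4 + 9/64 * v0)) / t ^ 5) + (η * (v0 / 16 + 7 * v0 ^ 2 / 24 + 25 * v0 ^ 3 / 96 + v0 ^ 4 / 48 + v0 ^ 5 / 768) + η ^ 3 * (-11/96 - 97/192 * v0 - 27/128 * v0 ^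 2 + 17/768 * v0 ^ 3) + η ^ 5 * (55/384 + 5/96 * v0)) / t ^ 6 := by
      funext t
      rw [hc1, hc2, hc3, hP1, hP2, hP3, hQ1, hQ2, hQ3]
      ring
    rw [e]
    exact ((monO _ le_rfl).add (monO _ (by norm_num))).add (monO _ (by norm_num))
  have efin : (fun t : ℝ => Real.sin (c1 / t + c2 / t ^ 2 + c3 / t ^ 3 - η * Real.log (1 + (c1 / t + c2 / t ^ 2 + c3 / t ^ 3) / t)) * (1 + P1 * (1 / (2 * (t + (c1 / t + c2 / t ^ 2 + c3 / t ^ 3)))) + P2 * ((1 / (2 * (t + (c1 / t + c2 / t ^ 2 + c3 / t ^ 3)))) * (1 / (2 * (t + (c1 / t + c2 / t ^ 2 + c3 / t ^ 3))))) + P3 * ((1 / (2 * (t + (c1 / t + c2 / t ^ 2 + c3 / t ^ 3)))) * ((1 / (2 * (t + (c1 / t + c2 / t ^ 2 + c3 / t ^ 3)))) * (1 / (2 * (t + (c1 / t + c2 / t ^ 2 + c3 / t ^ 3))))))) + Real.cos (c1 / t + c2 / t ^ 2 + c3 / t ^ 3 - η * Real.log (1 + (c1 / t + c2 / t ^ 2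 + c3 / t ^ 3) / t)) * (Q1 * (1 / (2 * (t + (c1 / t + c2 / t ^ 2 + c3 / t ^ 3)))) + Q2 * ((1 / (2 * (t + (c1 / t + c2 / t ^ 2 + c3 / t ^ 3)))) * (1 / (2 * (t + (c1 / t + c2 / t ^ 2 + c3 / t ^ 3))))) + Q3 * ((1 / (2 * (t + (c1 / t + c2 / t ^ 2 + c3 / t ^ 3)))) * ((1 / (2 * (t + (c1 / t + c2 / t ^ 2 + c3 / t ^ 3)))) * (1 / (2 * (t + (c1 / t + c2 / t ^ 2 + c3 / t ^ 3))))))))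
      = fun t : ℝ => ((Real.sin (c1 / t + c2 / t ^ 2 + c3 / t ^ 3 - η * Real.log (1 + (c1 / t + c2 / t ^ 2 + c3 / t ^ 3) / t)) * (1 + P1 * (1 / (2 * (t + (c1 / t + c2 / t ^ 2 + c3 / t ^ 3)))) + P2 * ((1 / (2 * (t + (c1 / t + c2 / t ^ 2 + c3 / t ^ 3)))) * (1 / (2 * (t + (c1 / t + c2 / t ^ 2 + c3 / t ^ 3))))) + P3 * ((1 / (2 * (t + (c1 / t + c2 / t ^ 2 + c3 / t ^ 3)))) * ((1 / (2 * (t + (c1 / t + c2 / t ^ 2 + c3 / t ^ 3)))) * (1 / (2 * (t + (c1 / t + c2 / t ^ 2 + c3 / t ^ 3))))))) + Real.cos (c1 / t + c2 / t ^ 2 + c3 / t ^ 3 - η * Real.log (1 + (c1 / t + c2 / t ^ 2 + c3 / t ^ 3) / t)) * (Q1 * (1 / (2 * (t + (c1 / t + c2 / t ^ 2 + c3 / t ^ 3)))) + Q2 * ((1 / (2 * (t + (c1 / t + c2 / t ^ 2 + c3 / t ^ 3)))) * (1 / (2 * (t + (c1 / t + c2 / t ^ 2 + c3 / t ^ 3)))))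 + Q3 * ((1 / (2 * (t + (c1 / t + c2 / t ^ 2 + c3 / t ^ 3)))) * ((1 / (2 * (t + (c1 / t + c2 / t ^ 2 + c3 / t ^ 3)))) * (1 / (2 * (t + (c1 / t + c2 / t ^ 2 + c3 / t ^ 3))))))))
          - ((c1 / t + (c2 - η * c1) / t ^ 2 + (c3 - η * c2 - c1 ^ 3 / 6) / t ^ 3) * (1 + P1 * (1 / (2 * t) - c1 / (2 * t ^ 3)) + P2 / (4 * t ^ 2) + P3 / (8 * t ^ 3)) + (1 - c1 ^ 2 / (2 * t ^ 2) - c1 * (c2 - η * c1) / t ^ 3) * (Q1 * (1 / (2 * t) - c1 / (2 * t ^ 3)) + Q2 / (4 * t ^ 2) + Q3 / (8 * t ^ 3)))) + ((c1 / t + (c2 - η * c1) / t ^ 2 + (c3 - η * c2 - c1 ^ 3 / 6) / t ^ 3) * (1 + P1 * (1 / (2 * t) - c1 / (2 * t ^ 3)) + P2 / (4 * t ^ 2) + P3 / (8 * t ^ 3)) + (1 - c1 ^ 2 / (2 * t ^ 2) - c1 * (c2 - η * c1) / t ^ 3) * (Q1 * (1 / (2 * t) - c1 / (2 * t ^ 3))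 + Q2 / (4 * t ^ 2) + Q3 / (8 * t ^ 3))) := by
    funext t; ring
  rw [efin]
  exact hFG.add hG

/-- with ε₁ = v₀/2, ε₂ = η(3v₀+1)/4, ε₃ = (22η²v₀+17η²−7v₀²−6v₀)/24,
ε = ε₁/ρ₀ + ε₂/ρ₀² + ε₃/ρ₀³, δ = ε − η ln(1+ε/ρ₀), ρ = ρ₀+ε, the truncation at k = 3 of
sin(δ)·Σ p_k/(2ρ)^k + cos(δ)·Σ q_k/(2ρ)^k is O(ρ₀⁻⁴). -/
theorem coulomb_mcmahon_third_order (lam η v0 ε₁ ε₂ ε₃ : ℝ)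
    (hv0 : v0 = -lam ^ 2 - lam - η ^ 2)
    (hε₁ : ε₁ = v0 / 2) (hε₂ : ε₂ = η * (3 * v0 + 1) / 4)
    (hε₃ : ε₃ = (22 * η ^ 2 * v0 + 17 * η ^ 2 - 7 * v0 ^ 2 - 6 * v0) / 24)
    (p q : ℕ → ℝ) (hp0 : p 0 = 1) (hq0 : q 0 = 0)
    (hp : ∀ k : ℕ, ((k : ℝ) + 1) * p (k + 1) =
      η * (2 * (k : ℝ) + 1) * p k +
        ((k : ℝ) + (k : ℝ) ^ 2 - lam ^ 2 - lam - η ^ 2) * q k)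
    (hq : ∀ k : ℕ, ((k : ℝ) + 1) * q (k + 1) =
      -((k : ℝ) + (k : ℝ) ^ 2 - lam ^ 2 - lam - η ^ 2) * p k +
        η * (2 * (k : ℝ) + 1) * q k) :
    (fun ρ₀ : ℝ =>
        let ε : ℝ := ε₁ / ρ₀ + ε₂ / ρ₀ ^ 2 + ε₃ / ρ₀ ^ 3
        let δ : ℝ := ε - η * Real.log (1 + ε / ρ₀)
        let ρ : ℝ := ρ₀ + ε
        Real.sin δ * (∑ k ∈ Finset.range 4, p k / (2 * ρ) ^ k) +
          Real.cos δ * (∑ k ∈ Finset.range 4, q k / (2 * ρ) ^ k))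
      =O[atTop] fun ρ₀ : ℝ => ρ₀ ^ (-4 : ℤ) := by
  have hAux : ∀ k : ℕ, ((k : ℝ) + (k : ℝ) ^ 2 - lam ^ 2 - lam - η ^ 2)
      = (k : ℝ) + (k : ℝ) ^ 2 + v0 := by
    intro k; rw [hv0]; ring
  have hp' : ∀ k : ℕ, ((k : ℝ) + 1) * p (k + 1) =
      η * (2 * (k : ℝ) + 1) * p k + ((k : ℝ) + (k : ℝ) ^ 2 + v0) * q k := by
    intro k; rw [← hAux k]; exact hp k
  have hq' : ∀ k : ℕ, ((k : ℝ) + 1) * q (k + 1) =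
      -((k : ℝ) + (k : ℝ) ^ 2 + v0) * p k + η * (2 * (k : ℝ) + 1) * q k := by
    intro k; rw [← hAux k]; exact hq k
  have hp1 : p 1 = η := by
    have h := hp' 0; rw [hp0, hq0] at h; norm_num at h; linarith
  have hq1 : q 1 = -v0 := by
    have h := hq' 0; rw [hp0, hq0] at h; norm_num at h; linarith
  have hp2 : p 2 = 3 / 2 * η ^ 2 - v0 - v0 ^ 2 / 2 := by
    have h := hp' 1; norm_num at h; rw [hp1, hq1] at h; linear_combination h / 2
  have hq2 : q 2 = -η - 2 * η * v0 := by
    have h := hq' 1; norm_num at h; rw [hp1, hq1] at h; linear_combination h / 2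
  have hp3 : p 3 = 5 / 2 * η ^ 3 - 6 * η * v0 - 3 / 2 * η * v0 ^ 2 - 2 * η := by
    have h := hp' 2; norm_num at h; rw [hp2, hq2] at h; linear_combination h / 3
  have hq3 : q 3 = -14 / 3 * η ^ 2 + 2 * v0 + 4 / 3 * v0 ^ 2 - 23 / 6 * η ^ 2 * v0
      + 1 / 6 * v0 ^ 3 := by
    have h := hq' 2; norm_num at h; rw [hp2, hq2] at h; linear_combination h / 3
  have M := master η v0 ε₁ ε₂ ε₃ (p 1) (p 2) (p 3) (q 1) (q 2) (q 3)
    hε₁ hε₂ hε₃ hp1 hp2 hp3 hq1 hq2 hq3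
  have hzp : (fun ρ₀ : ℝ => ρ₀ ^ (-4 : ℤ)) = fun t : ℝ => (t ^ 4)⁻¹ := by
    funext t
    rw [show (-4 : ℤ) = -((4 : ℕ) : ℤ) by norm_num, zpow_neg, zpow_natCast]
  rw [hzp]
  refine M.congr_left fun t => ?_
  show _ = Real.sin _ * (∑ k ∈ Finset.range 4, p k / _ ^ k) +
      Real.cos _ * (∑ k ∈ Finset.range 4, q k / _ ^ k)
  simp only [Finset.sum_range_succ, Finset.sum_range_zero, hp0, hq0]
  ring
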